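/- Let α > 1, weights 1 ≥ γ_1 ≥ … ≥ γ_d > 0, N ≥ 1, and τ ∈ (1/α, 1). Then Σ_{h ∈ ℤ^d \ A_d(N)} r_d(α,γ,h)^{-1} ≤ |A_d(N)|^{1-1/τ} · (τ/(1-τ)) · ∏_{j=1}^d (1 + 2ζ(ατ) γ_j^τ)^{1/τ}. -/

import Mathlib

noncomputable def realZeta (s : ℝ) : ℝ := ∑' n : ℕ, ((n : ℝ) + 1) ^ (-s)

/-!
List the lattice points outside `A_d(N)` by increasing weight `r = r_d(α,γ,·)`. The `k`-th of
them, `h_k`, weighs at least as much as each of the `|A_d(N)| + k` points up to it, so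
`(|A_d(N)| + k) r(h_k)^{-τ} ≤ ∑_h r(h)^{-τ} ≤ M := ∏_j (1 + 2ζ(ατ) γ_j^τ)`, the last bound because
`r^{-τ}` factorises over coordinates and `ατ > 1`. Hence `r(h_k)^{-1} ≤ M^{1/τ} (|A_d(N)| + k)^{-1/τ}`,
and comparing `∑_{k ≥ 1} (m + k)^{-1/τ}`, where `m = |A_d(N)|`, with
`∫_m^∞ x^{-1/τ} dx = τ/(1-τ) · m^{1-1/τ}` finishes.
-/

open Finset

lemma hasSum_realZeta {s : ℝ} (hs : 1 < s) :
    HasSum (fun n : ℕ => ((n : ℝ) + 1) ^ (-s)) (realZeta s) := by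
  have h := (Real.summable_nat_rpow.2 (neg_lt_neg hs)).comp_injective (add_left_injective 1)
  exact (h.congr fun n => by simp).hasSum

lemma realZeta_nonneg (s : ℝ) : 0 ≤ realZeta s :=
  tsum_nonneg fun _ => Real.rpow_nonneg (by positivity) _

lemma hasSum_abs_int_rpow_neg {s : ℝ} (hs : 1 < s) :
    HasSum (fun z : ℤ => |(z : ℝ)| ^ (-s)) (2 * realZeta s) := by
  have hpos : HasSum (fun n : ℕ => |((n : ℤ) : ℝ)| ^ (-s)) (realZeta s) := by
    refine (hasSum_nat_add_iff' 1).1 ?_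
    -- `0 ^ (-s) = 0` for `s ≠ 0`, so the term `z = 0` does not contribute.
    have h0 : ∑ i ∈ range 1, |(((i : ℕ) : ℤ) : ℝ)| ^ (-s) = 0 := by
      simp [Real.zero_rpow (by linarith : -s ≠ 0)]
    rw [h0, sub_zero]
    refine (hasSum_realZeta hs).congr_fun fun n => ?_
    push_cast
    rw [abs_of_nonneg (by positivity)]
  have hneg : HasSum (fun n : ℕ => |((-(n + 1) : ℤ) : ℝ)| ^ (-s)) (realZeta s) := by
    refine (hasSum_realZeta hs).congr_fun fun n => ?_
    simp only [Int.cast_neg, Int.cast_add, Int.cast_natCast, Int.cast_one, abs_neg]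
    rw [abs_of_nonneg (by positivity)]
  rw [two_mul]
  exact hpos.of_nat_of_neg_add_one hneg

noncomputable def korobovFactor (α g : ℝ) (z : ℤ) : ℝ := max 1 (g⁻¹ * |(z : ℝ)| ^ α)

noncomputable def korobovWeight {ι : Type*} [Fintype ι] (α : ℝ) (γ : ι → ℝ) (h : ι → ℤ) : ℝ :=
  ∏ j, korobovFactor α (γ j) (h j)

section KorobovFactor

variable {α g τ : ℝ}

lemma one_le_korobovFactor (z : ℤ) : 1 ≤ korobovFactor α g z := le_max_left _ _

lemma korobovFactor_pos (z : ℤ) : 0 < korobovFactor α g z :=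
  one_pos.trans_le (one_le_korobovFactor z)

lemma korobovFactor_rpow_neg_le (hg : 0 < g) (hτ : 0 ≤ τ) {z : ℤ} (hz : z ≠ 0) :
    korobovFactor α g z ^ (-τ) ≤ g ^ τ * |(z : ℝ)| ^ (-(α * τ)) := by
  have hz' : 0 < |(z : ℝ)| := abs_pos.2 (Int.cast_ne_zero.2 hz)
  calc korobovFactor α g z ^ (-τ) ≤ (g⁻¹ * |(z : ℝ)| ^ α) ^ (-τ) :=
        Real.rpow_le_rpow_of_nonpos (by positivity) (le_max_right _ _) (neg_nonpos.2 hτ)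
    _ = g ^ τ * |(z : ℝ)| ^ (-(α * τ)) := by
        rw [Real.mul_rpow (by positivity) (by positivity), Real.inv_rpow hg.le,
          ← Real.rpow_neg hg.le, neg_neg, ← Real.rpow_mul hz'.le, mul_neg]

lemma sum_korobovFactor_rpow_neg_le (hg : 0 < g) (hτ : 0 ≤ τ) (hs : 1 < α * τ)
    (T : Finset ℤ) :
    ∑ z ∈ T, korobovFactor α g z ^ (-τ) ≤ 1 + 2 * realZeta (α * τ) * g ^ τ := by
  have hnonneg : ∀ z, 0 ≤ korobovFactor α g z ^ (-τ) :=
    fun z => Real.rpow_nonneg (korobovFactor_pos z).le _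
  have hzero : korobovFactor α g 0 ^ (-τ) ≤ 1 :=
    Real.rpow_le_one_of_one_le_of_nonpos (one_le_korobovFactor 0) (neg_nonpos.2 hτ)
  have hrest : ∑ z ∈ (insert 0 T).erase 0, korobovFactor α g z ^ (-τ)
      ≤ g ^ τ * (2 * realZeta (α * τ)) := by
    calc ∑ z ∈ (insert 0 T).erase 0, korobovFactor α g z ^ (-τ)
        ≤ ∑ z ∈ (insert 0 T).erase 0, g ^ τ * |(z : ℝ)| ^ (-(α * τ)) :=
          sum_le_sum fun z hz => korobovFactor_rpow_neg_le hg hτ (ne_of_mem_erase hz)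
      _ ≤ g ^ τ * (2 * realZeta (α * τ)) := by
          rw [← mul_sum]
          exact mul_le_mul_of_nonneg_left
            (sum_le_hasSum _ (fun _ _ => by positivity) (hasSum_abs_int_rpow_neg hs))
            (by positivity)
  calc ∑ z ∈ T, korobovFactor α g z ^ (-τ)
      ≤ ∑ z ∈ insert 0 T, korobovFactor α g z ^ (-τ) :=
        sum_le_sum_of_subset_of_nonneg (subset_insert _ _) fun z _ _ => hnonneg z
    _ = korobovFactor α g 0 ^ (-τ) + ∑ z ∈ (insert 0 T).erase 0, korobovFactor α g z ^ (-τ) :=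
        (add_sum_erase _ _ (mem_insert_self _ _)).symm
    _ ≤ 1 + 2 * realZeta (α * τ) * g ^ τ := by linarith

end KorobovFactor

lemma sum_prod_le_prod_of_sum_le {ι κ : Type*} [Fintype ι] [DecidableEq ι] {φ : ι → κ → ℝ}
    (hφ : ∀ j z, 0 ≤ φ j z) {C : ι → ℝ} (hC : ∀ j (T : Finset κ), ∑ z ∈ T, φ j z ≤ C j)
    (F : Finset (ι → κ)) :
    ∑ h ∈ F, ∏ j, φ j (h j) ≤ ∏ j, C j := by
  classical
  let T : ι → Finset κ := fun j => F.image (· j)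
  have hF : F ⊆ Fintype.piFinset T := fun h hh =>
    Fintype.mem_piFinset.2 fun j => mem_image_of_mem _ hh
  calc ∑ h ∈ F, ∏ j, φ j (h j) ≤ ∑ h ∈ Fintype.piFinset T, ∏ j, φ j (h j) :=
        sum_le_sum_of_subset_of_nonneg hF fun h _ _ => prod_nonneg fun j _ => hφ j (h j)
    _ = ∏ j, ∑ z ∈ T j, φ j z := (prod_univ_sum T φ).symm
    _ ≤ ∏ j, C j := prod_le_prod (fun j _ => sum_nonneg fun z _ => hφ j z) fun j _ => hC j _

lemma sum_korobovWeight_rpow_neg_le {ι : Type*} [Fintype ι] [DecidableEq ι] {α τ : ℝ}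
    {γ : ι → ℝ} (hγ : ∀ j, 0 < γ j) (hτ : 0 ≤ τ) (hs : 1 < α * τ) (F : Finset (ι → ℤ)) :
    ∑ h ∈ F, korobovWeight α γ h ^ (-τ) ≤ ∏ j, (1 + 2 * realZeta (α * τ) * γ j ^ τ) := by
  have hsplit : ∀ h, korobovWeight α γ h ^ (-τ) = ∏ j, korobovFactor α (γ j) (h j) ^ (-τ) :=
    fun h => (Real.finsetProd_rpow _ _ (fun j _ => (korobovFactor_pos _).le) _).symm
  rw [sum_congr rfl fun h _ => hsplit h]
  exact sum_prod_le_prod_of_sum_le (φ := fun j z => korobovFactor α (γ j) z ^ (-τ))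
    (C := fun j => 1 + 2 * realZeta (α * τ) * γ j ^ τ) (fun j z => Real.rpow_nonneg (korobovFactor_pos z).le _)
    (fun j => sum_korobovFactor_rpow_neg_le (hγ j) hτ hs) F

lemma korobovWeight_pos {ι : Type*} [Fintype ι] (α : ℝ) (γ : ι → ℝ) (h : ι → ℤ) :
    0 < korobovWeight α γ h :=
  prod_pos fun _ _ => korobovFactor_pos _

section Truncation

variable {ι : Type*} {r : ι → ℝ} {τ M : ℝ}

lemma inv_le_of_sum_rpow_neg_le (hr : ∀ i, 0 < r i) (hτ : 0 < τ) {G : Finset ι}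
    (hG : G.Nonempty) {a : ι} (hGa : ∀ g ∈ G, r g ≤ r a) (hM : ∑ g ∈ G, r g ^ (-τ) ≤ M) :
    (r a)⁻¹ ≤ M ^ (1 / τ) * (G.card : ℝ) ^ (-(1 / τ)) := by
  have hc : (0 : ℝ) < G.card := by exact_mod_cast hG.card_pos
  have hcard : (G.card : ℝ) * r a ^ (-τ) ≤ M :=
    calc (G.card : ℝ) * r a ^ (-τ) = G.card • r a ^ (-τ) := (nsmul_eq_mul _ _).symm
      _ ≤ ∑ g ∈ G, r g ^ (-τ) := card_nsmul_le_sum _ _ _ fun g hg =>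
          Real.rpow_le_rpow_of_nonpos (hr g) (hGa g hg) (by linarith)
      _ ≤ M := hM
  have hM0 : 0 ≤ M := le_trans (mul_nonneg hc.le (Real.rpow_nonneg (hr a).le _)) hcard
  calc (r a)⁻¹ = (r a ^ (-τ)) ^ (1 / τ) := by
        rw [← Real.rpow_mul (hr a).le, neg_mul, mul_one_div_cancel hτ.ne', Real.rpow_neg_one]
    _ ≤ (M / G.card) ^ (1 / τ) :=
        Real.rpow_le_rpow (Real.rpow_nonneg (hr a).le _) ((le_div_iff₀' hc).2 hcard)
          (one_div_pos.2 hτ).le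
    _ = M ^ (1 / τ) * (G.card : ℝ) ^ (-(1 / τ)) := by
        rw [Real.div_rpow hM0 hc.le, Real.rpow_neg hc.le, div_eq_mul_inv]

lemma sum_inv_le_of_forall_sum_rpow_neg_le [DecidableEq ι] (hr : ∀ i, 0 < r i) (hτ : 0 < τ)
    (hM : ∀ G : Finset ι, ∑ g ∈ G, r g ^ (-τ) ≤ M) (S F : Finset ι)
    (hSF : ∀ s ∈ S, ∀ f ∈ F, r s < r f) :
    ∑ f ∈ F, (r f)⁻¹ ≤ M ^ (1 / τ) * ∑ k ∈ range F.card, ((S.card : ℝ) + k + 1) ^ (-(1 / τ)) := by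
  revert hSF
  refine Finset.induction_on_max_value r F (by simp) fun a F haF hmax ih hSF => ?_
  have hdisj : Disjoint S (insert a F) :=
    disjoint_left.2 fun x hxS hxF => lt_irrefl _ (hSF x hxS x hxF)
  have hG : ∀ g ∈ S ∪ insert a F, r g ≤ r a := by
    intro g hg
    rcases mem_union.1 hg with hgS | hgF
    · exact (hSF g hgS a (mem_insert_self _ _)).le
    · rcases mem_insert.1 hgF with rfl | hgF
      exacts [le_rfl, hmax g hgF]
  have ha := inv_le_of_sum_rpow_neg_le hr hτ ⟨a, mem_union_right _ (mem_insert_self _ _)⟩ hG (hM _)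
  rw [card_union_of_disjoint hdisj, card_insert_of_notMem haF] at ha
  push_cast at ha
  rw [← add_assoc] at ha
  rw [sum_insert haF, card_insert_of_notMem haF, sum_range_succ, mul_add]
  linarith [ih fun s hs f hf => hSF s hs f (mem_insert_of_mem hf)]

lemma sum_range_add_rpow_neg_le {q m : ℝ} (hq : 1 < q) (hm : 0 < m) (K : ℕ) :
    ∑ k ∈ range K, (m + k + 1) ^ (-q) ≤ m ^ (1 - q) / (q - 1) := by
  have hanti : AntitoneOn (fun x : ℝ => x ^ (-q)) (Set.Icc m (m + K)) := fun x hx y _ hxy =>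
    Real.rpow_le_rpow_of_nonpos (hm.trans_le hx.1) hxy (by linarith)
  have h0 : (0 : ℝ) ∉ Set.uIcc m (m + K) := by
    rw [Set.uIcc_of_le (by linarith [K.cast_nonneg (α := ℝ)])]
    exact fun h => hm.not_ge h.1
  calc ∑ k ∈ range K, (m + k + 1) ^ (-q) = ∑ k ∈ range K, (m + ((k + 1 : ℕ) : ℝ)) ^ (-q) := by
        push_cast; simp only [add_assoc]
    _ ≤ ∫ x in m..m + K, x ^ (-q) := hanti.sum_le_integral
    _ = (m ^ (1 - q) - (m + K) ^ (1 - q)) / (q - 1) := by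
        rw [integral_rpow (Or.inr ⟨by linarith, h0⟩), show -q + 1 = 1 - q by ring,
          ← neg_div_neg_eq, neg_sub, neg_sub]
    _ ≤ m ^ (1 - q) / (q - 1) :=
        div_le_div_of_nonneg_right (sub_le_self _ (Real.rpow_nonneg (by positivity) _))
          (by linarith)

lemma tsum_inv_le_of_forall_sum_rpow_neg_le (hr : ∀ i, 0 < r i) (hτ0 : 0 < τ) (hτ1 : τ < 1)
    (hM : ∀ G : Finset ι, ∑ g ∈ G, r g ^ (-τ) ≤ M) {N : ℝ} (hA : {i | r i ≤ N}.Finite)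
    (hAne : hA.toFinset.Nonempty) :
    ∑' i : {i // ¬ r i ≤ N}, (r i)⁻¹ ≤
      (hA.toFinset.card : ℝ) ^ (1 - 1 / τ) * (τ / (1 - τ)) * M ^ (1 / τ) := by
  classical
  set S := hA.toFinset
  have hq : 1 < 1 / τ := by rw [lt_div_iff₀ hτ0]; linarith
  have hm : (0 : ℝ) < S.card := by exact_mod_cast hAne.card_pos
  have hM0 : 0 ≤ M := by simpa using hM ∅
  have hratio : 0 < τ / (1 - τ) := div_pos hτ0 (by linarith)
  refine tsum_le_of_sum_le' (by positivity) fun F => ?_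
  have hSF : ∀ s ∈ S, ∀ f ∈ F.map (Function.Embedding.subtype _), r s < r f := by
    intro s hs f hf
    obtain ⟨x, -, rfl⟩ := mem_map.1 hf
    exact (hA.mem_toFinset.1 hs).trans_lt (not_le.1 x.2)
  calc ∑ i ∈ F, (r i)⁻¹ = ∑ i ∈ F.map (Function.Embedding.subtype _), (r i)⁻¹ :=
        (sum_map F (Function.Embedding.subtype _) fun i => (r i)⁻¹).symm
    _ ≤ M ^ (1 / τ) * ∑ k ∈ range (F.map _).card, ((S.card : ℝ) + k + 1) ^ (-(1 / τ)) :=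
        sum_inv_le_of_forall_sum_rpow_neg_le hr hτ0 hM S _ hSF
    _ ≤ M ^ (1 / τ) * ((S.card : ℝ) ^ (1 - 1 / τ) / (1 / τ - 1)) :=
        mul_le_mul_of_nonneg_left (sum_range_add_rpow_neg_le hq hm _) (by positivity)
    _ = (S.card : ℝ) ^ (1 - 1 / τ) * (τ / (1 - τ)) * M ^ (1 / τ) := by
        rw [show 1 / τ - 1 = (1 - τ) / τ by field_simp, div_div_eq_mul_div]
        ring

end Truncation

theorem korobov_truncation_error_general (d : ℕ) (α : ℝ) (hα : 1 < α)
    (γ : Fin d → ℝ) (hγpos : ∀ j, 0 < γ j)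
    (N : ℝ) (hN : 1 ≤ N) (τ : ℝ) (hτ1 : 1 / α < τ) (hτ2 : τ < 1)
    (hA : {h : Fin d → ℤ | (∏ j, max 1 ((γ j)⁻¹ * |(h j : ℝ)| ^ α)) ≤ N}.Finite) :
    (∑' g : {h : Fin d → ℤ // ¬ (∏ j, max 1 ((γ j)⁻¹ * |(h j : ℝ)| ^ α)) ≤ N},
        (∏ j, max 1 ((γ j)⁻¹ * |(g.1 j : ℝ)| ^ α))⁻¹) ≤
      (hA.toFinset.card : ℝ) ^ (1 - 1 / τ) * (τ / (1 - τ)) *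
        ∏ j, (1 + 2 * realZeta (α * τ) * γ j ^ τ) ^ (1 / τ) := by
  have hα0 : 0 < α := by linarith
  have hτ0 : 0 < τ := (one_div_pos.2 hα0).trans hτ1
  have hs : 1 < α * τ := by rwa [div_lt_iff₀ hα0, mul_comm] at hτ1
  have h0 : (0 : Fin d → ℤ) ∈ hA.toFinset := by
    simpa [Real.zero_rpow hα0.ne'] using hN
  have hfactor : ∀ j, 0 ≤ 1 + 2 * realZeta (α * τ) * γ j ^ τ := fun j =>
    add_nonneg zero_le_one
      (mul_nonneg (mul_nonneg zero_le_two (realZeta_nonneg _)) (Real.rpow_nonneg (hγpos j).le _))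
  rw [Real.finsetProd_rpow _ _ fun j _ => hfactor j]
  exact tsum_inv_le_of_forall_sum_rpow_neg_le (r := korobovWeight α γ) (korobovWeight_pos α γ)
    hτ0 hτ2 (sum_korobovWeight_rpow_neg_le hγpos hτ0.le hs) hA ⟨0, h0⟩

theorem korobov_truncation_error (d : ℕ) (α : ℝ) (hα : 1 < α)
    (γ : Fin d → ℝ) (hγpos : ∀ j, 0 < γ j) (hγ1 : ∀ j, γ j ≤ 1)
    (hγmono : ∀ i j : Fin d, i ≤ j → γ j ≤ γ i)
    (N : ℝ) (hN : 1 ≤ N) (τ : ℝ) (hτ1 : 1 / α < τ) (hτ2 : τ < 1)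
    (hA : {h : Fin d → ℤ | (∏ j, max 1 ((γ j)⁻¹ * |(h j : ℝ)| ^ α)) ≤ N}.Finite) :
    (∑' g : {h : Fin d → ℤ // ¬ (∏ j, max 1 ((γ j)⁻¹ * |(h j : ℝ)| ^ α)) ≤ N},
        (∏ j, max 1 ((γ j)⁻¹ * |(g.1 j : ℝ)| ^ α))⁻¹) ≤
      (hA.toFinset.card : ℝ) ^ (1 - 1 / τ) * (τ / (1 - τ)) *
        ∏ j, (1 + 2 * realZeta (α * τ) * γ j ^ τ) ^ (1 / τ) :=
  korobov_truncation_error_general d α hα γ hγpos N hN τ hτ1 hτ2 hA
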